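/- If X ∈ ℝ^{m×p} is (c_x,γ_x)-SED away from agent i and Y ∈ ℝ^{n×m} is (c_y,γ_y)-SED, then the product XY is (N·c_x·c_y, γ)-SED away from agent i (and the same bound holds for YX when the dimensions are compatible), where γ = min(γ_x, γ_y). -/

import Mathlib

open Matrix

/-- Operator (induced l2) norm of a real matrix. -/
noncomputable def opNorm {α β : Type*} [Fintype α] [Fintype β] [DecidableEq β]
    (X : Matrix α β ℝ) : ℝ :=
  ‖LinearMap.toContinuousLinearMap (Matrix.toEuclideanLin X)‖

/-- Block `(l,j)` of a block-partitioned matrix. -/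
def blk {N : ℕ} {n m : Fin N → ℕ}
    (X : Matrix ((l : Fin N) × Fin (n l)) ((j : Fin N) × Fin (m j)) ℝ)
    (l j : Fin N) : Matrix (Fin (n l)) (Fin (m j)) ℝ :=
  fun a b => X ⟨l, a⟩ ⟨j, b⟩

/-- Block row of agent `i`. -/
def blkRow {N : ℕ} {n m : Fin N → ℕ}
    (K : Matrix ((l : Fin N) × Fin (m l)) ((j : Fin N) × Fin (n j)) ℝ)
    (i : Fin N) : Matrix (Fin (m i)) ((j : Fin N) × Fin (n j)) ℝ :=
  fun a b => K ⟨i, a⟩ b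

/-- Zero-padded version of a diagonal block. -/
def pad {N : ℕ} {n : Fin N → ℕ} (i : Fin N) (M : Matrix (Fin (n i)) (Fin (n i)) ℝ) :
    Matrix ((l : Fin N) × Fin (n l)) ((j : Fin N) × Fin (n j)) ℝ :=
  fun a b => if ha : a.1 = i then (if hb : b.1 = i then M (ha ▸ a.2) (hb ▸ b.2) else 0) else 0

/-- κ-truncation relative to agent `i`. -/
noncomputable def trunc {N : ℕ} {n m : Fin N → ℕ} (dist : Fin N → Fin N → ℝ) (i : Fin N) (κ : ℝ)
    (X : Matrix ((l : Fin N) × Fin (n l)) ((j : Fin N) × Fin (m j)) ℝ) :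
    Matrix ((l : Fin N) × Fin (n l)) ((j : Fin N) × Fin (m j)) ℝ :=
  fun a b => if max (dist i a.1) (dist i b.1) < κ then X a b else 0

/-- `X` is `(c,γ)`-spatially exponentially decaying. -/
def IsSED {N : ℕ} {n m : Fin N → ℕ} (dist : Fin N → Fin N → ℝ) (c γ : ℝ)
    (X : Matrix ((l : Fin N) × Fin (n l)) ((j : Fin N) × Fin (m j)) ℝ) : Prop :=
  ∀ l j : Fin N, opNorm (blk X l j) ≤ c * Real.exp (-γ * dist l j)

/-- `X` is `(c,γ)`-SED away from agent `i`. -/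
def IsSEDAway {N : ℕ} {n m : Fin N → ℕ} (dist : Fin N → Fin N → ℝ) (i : Fin N) (c γ : ℝ)
    (X : Matrix ((l : Fin N) × Fin (n l)) ((j : Fin N) × Fin (m j)) ℝ) : Prop :=
  ∀ l j : Fin N, opNorm (blk X l j) ≤ c * Real.exp (-γ * max (dist i l) (dist i j))

/-- `X` is `(τ,ρ)`-stable. -/
def IsStable {α : Type*} [Fintype α] [DecidableEq α] (τ ρ : ℝ) (X : Matrix α α ℝ) : Prop :=
  ∀ k : ℕ, opNorm (X ^ k) ≤ τ * Real.exp (-ρ * (k : ℝ))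

/-
Each block of a product is a sum over the `N` intermediate agents `k` of products of blocks. The
decay of `X` from `i` through `max (dist i l) (dist i k)` and the decay of `Y` along `dist k j`
combine, by the triangle inequality `dist i j ≤ dist i k + dist k j`, into decay
`min γx γy · max (dist i l) (dist i j)` for every term; summing `N` such terms gives the factor `N`.
For `Z * X` the triangle inequality is used at `l` instead, `dist i l ≤ dist i k + dist k l`, which
is where symmetry of `dist` enters.
-/

open scoped Matrix.Norms.L2Operator

section BlockNorm

variable {N : ℕ} {n m r : Fin N → ℕ}

lemma opNorm_eq_norm {α β : Type*} [Fintype α] [Fintype β] [DecidableEq β]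
    (X : Matrix α β ℝ) : opNorm X = ‖X‖ := rfl

lemma opNorm_nonneg {α β : Type*} [Fintype α] [Fintype β] [DecidableEq β]
    (X : Matrix α β ℝ) : 0 ≤ opNorm X := norm_nonneg X

lemma blk_mul (X : Matrix ((l : Fin N) × Fin (n l)) ((j : Fin N) × Fin (m j)) ℝ)
    (Y : Matrix ((l : Fin N) × Fin (m l)) ((j : Fin N) × Fin (r j)) ℝ) (l j : Fin N) :
    blk (X * Y) l j = ∑ k : Fin N, blk X l k * blk Y k j := by
  ext a b
  simp only [blk, Matrix.mul_apply, Matrix.sum_apply]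
  rw [← Finset.univ_sigma_univ, Finset.sum_sigma]

lemma opNorm_blk_mul_le_sum (X : Matrix ((l : Fin N) × Fin (n l)) ((j : Fin N) × Fin (m j)) ℝ)
    (Y : Matrix ((l : Fin N) × Fin (m l)) ((j : Fin N) × Fin (r j)) ℝ) (l j : Fin N) :
    opNorm (blk (X * Y) l j) ≤ ∑ k : Fin N, opNorm (blk X l k) * opNorm (blk Y k j) := by
  rw [blk_mul, opNorm_eq_norm]
  exact (norm_sum_le _ _).trans
    (Finset.sum_le_sum fun k _ => Matrix.l2_opNorm_mul (blk X l k) (blk Y k j))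

lemma opNorm_blk_mul_le_of_forall_le
    (X : Matrix ((l : Fin N) × Fin (n l)) ((j : Fin N) × Fin (m j)) ℝ)
    (Y : Matrix ((l : Fin N) × Fin (m l)) ((j : Fin N) × Fin (r j)) ℝ) (l j : Fin N) {C : ℝ}
    (h : ∀ k, opNorm (blk X l k) * opNorm (blk Y k j) ≤ C) :
    opNorm (blk (X * Y) l j) ≤ N * C := by
  calc opNorm (blk (X * Y) l j)
      ≤ ∑ k : Fin N, opNorm (blk X l k) * opNorm (blk Y k j) := opNorm_blk_mul_le_sum X Y l j
    _ ≤ ∑ _k : Fin N, C := Finset.sum_le_sum fun k _ => h k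
    _ = N * C := by simp

end BlockNorm

lemma mul_le_mul_exp_min {u v cx cy γx γy a b d : ℝ} (hu : 0 ≤ u) (hv : 0 ≤ v)
    (hux : u ≤ cx * Real.exp (-γx * a)) (hvy : v ≤ cy * Real.exp (-γy * b))
    (hγx : 0 ≤ γx) (hγy : 0 ≤ γy) (ha : 0 ≤ a) (hb : 0 ≤ b) (hd : d ≤ a + b) :
    u * v ≤ cx * cy * Real.exp (-min γx γy * d) := by
  have hcx : 0 ≤ cx := nonneg_of_mul_nonneg_left (hu.trans hux) (Real.exp_pos _)
  have hcy : 0 ≤ cy := nonneg_of_mul_nonneg_left (hv.trans hvy) (Real.exp_pos _)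
  have hexp : min γx γy * d ≤ γx * a + γy * b :=
    calc min γx γy * d ≤ min γx γy * a + min γx γy * b := by
          rw [← mul_add]; exact mul_le_mul_of_nonneg_left hd (le_min hγx hγy)
      _ ≤ γx * a + γy * b := by gcongr; exacts [min_le_left _ _, min_le_right _ _]
  calc u * v ≤ (cx * Real.exp (-γx * a)) * (cy * Real.exp (-γy * b)) :=
        mul_le_mul hux hvy hv (hu.trans hux)
    _ = cx * cy * Real.exp (-γx * a + -γy * b) := by rw [Real.exp_add]; ring
    _ ≤ cx * cy * Real.exp (-min γx γy * d) :=
        mul_le_mul_of_nonneg_left (Real.exp_le_exp.mpr (by linarith)) (mul_nonneg hcx hcy)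

section Distance

variable {N : ℕ} {dist : Fin N → Fin N → ℝ}

lemma max_dist_le_max_add_dist (hdist_nonneg : ∀ l j, 0 ≤ dist l j)
    (hdist_tri : ∀ l j k, dist l j ≤ dist l k + dist k j) (i l j k : Fin N) :
    max (dist i l) (dist i j) ≤ max (dist i l) (dist i k) + dist k j :=
  max_le (le_add_of_le_of_nonneg (le_max_left _ _) (hdist_nonneg k j))
    ((hdist_tri i j k).trans (add_le_add_left (le_max_right _ _) _))

lemma max_dist_le_dist_add_max (hdist_nonneg : ∀ l j, 0 ≤ dist l j)
    (hdist_symm : ∀ l j, dist l j = dist j l)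
    (hdist_tri : ∀ l j k, dist l j ≤ dist l k + dist k j) (i l j k : Fin N) :
    max (dist i l) (dist i j) ≤ dist l k + max (dist i k) (dist i j) := by
  refine max_le ?_ (le_add_of_nonneg_of_le (hdist_nonneg l k) (le_max_right _ _))
  calc dist i l ≤ dist i k + dist k l := hdist_tri i l k
    _ ≤ dist l k + max (dist i k) (dist i j) := by
        rw [hdist_symm k l, add_comm]; gcongr; exact le_max_left _ _

end Distance

section Product

variable {N : ℕ} {n m r : Fin N → ℕ} {dist : Fin N → Fin N → ℝ} {i : Fin N} {cx cy γx γy : ℝ}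

lemma IsSEDAway.mul_isSED (hdist_nonneg : ∀ l j, 0 ≤ dist l j)
    (hdist_tri : ∀ l j k, dist l j ≤ dist l k + dist k j) (hγx : 0 ≤ γx) (hγy : 0 ≤ γy)
    {X : Matrix ((l : Fin N) × Fin (n l)) ((j : Fin N) × Fin (m j)) ℝ}
    {Y : Matrix ((l : Fin N) × Fin (m l)) ((j : Fin N) × Fin (r j)) ℝ}
    (hX : IsSEDAway dist i cx γx X) (hY : IsSED dist cy γy Y) :
    IsSEDAway dist i (N * cx * cy) (min γx γy) (X * Y) := fun l j => by
  have h := opNorm_blk_mul_le_of_forall_le X Y l j fun k =>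
    mul_le_mul_exp_min (opNorm_nonneg _) (opNorm_nonneg _) (hX l k) (hY k j) hγx hγy
      ((hdist_nonneg i l).trans (le_max_left _ _)) (hdist_nonneg k j)
      (max_dist_le_max_add_dist hdist_nonneg hdist_tri i l j k)
  exact h.trans_eq (by ring)

lemma IsSED.mul_isSEDAway (hdist_nonneg : ∀ l j, 0 ≤ dist l j)
    (hdist_symm : ∀ l j, dist l j = dist j l)
    (hdist_tri : ∀ l j k, dist l j ≤ dist l k + dist k j) (hγx : 0 ≤ γx) (hγy : 0 ≤ γy)
    {Z : Matrix ((l : Fin N) × Fin (n l)) ((j : Fin N) × Fin (m j)) ℝ}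
    {X : Matrix ((l : Fin N) × Fin (m l)) ((j : Fin N) × Fin (r j)) ℝ}
    (hZ : IsSED dist cy γy Z) (hX : IsSEDAway dist i cx γx X) :
    IsSEDAway dist i (N * cx * cy) (min γx γy) (Z * X) := fun l j => by
  have h := opNorm_blk_mul_le_of_forall_le Z X l j fun k =>
    mul_le_mul_exp_min (opNorm_nonneg _) (opNorm_nonneg _) (hZ l k) (hX k j) hγy hγx
      (hdist_nonneg l k) ((hdist_nonneg i k).trans (le_max_left _ _))
      (max_dist_le_dist_add_max hdist_nonneg hdist_symm hdist_tri i l j k)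
  rw [min_comm] at h
  exact h.trans_eq (by ring)

end Product

/-- Lemma 4: multiplying a matrix that is `(c_x,γ_x)`-SED away from agent `i`
by a `(c_y,γ_y)`-SED matrix (on the right, and likewise on the left when the dimensions are
compatible) yields a matrix that is `(N c_x c_y, min γ_x γ_y)`-SED away from agent `i`. -/
theorem SEDAway_mul_SED
    {N : ℕ} (p q r s : Fin N → ℕ) (dist : Fin N → Fin N → ℝ)
    (hdist_nonneg : ∀ l j, 0 ≤ dist l j)
    (hdist_symm : ∀ l j, dist l j = dist j l)
    (hdist_tri : ∀ l j k, dist l j ≤ dist l k + dist k j)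
    (i : Fin N) (cx cy γx γy : ℝ) (hγx : 0 ≤ γx) (hγy : 0 ≤ γy)
    (X : Matrix ((l : Fin N) × Fin (p l)) ((j : Fin N) × Fin (q j)) ℝ)
    (Y : Matrix ((l : Fin N) × Fin (q l)) ((j : Fin N) × Fin (r j)) ℝ)
    (Z : Matrix ((l : Fin N) × Fin (s l)) ((j : Fin N) × Fin (p j)) ℝ)
    (hX : IsSEDAway dist i cx γx X) (hY : IsSED dist cy γy Y)
    (hZ : IsSED dist cy γy Z) :
    IsSEDAway dist i ((N : ℝ) * cx * cy) (min γx γy) (X * Y) ∧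
    IsSEDAway dist i ((N : ℝ) * cx * cy) (min γx γy) (Z * X) :=
  ⟨hX.mul_isSED hdist_nonneg hdist_tri hγx hγy hY,
    hZ.mul_isSEDAway hdist_nonneg hdist_symm hdist_tri hγx hγy hX⟩
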